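/- Let H be a finitely generated projective Hopf k-algebra that is separable and involutive (S² = id). Then H is strongly separable in Kanzaki's sense: there exists e = Σⱼ zⱼ ⊗ wⱼ ∈ H ⊗ H with Σⱼ zⱼwⱼ = 1 and Σⱼ zⱼ a ⊗ wⱼ = Σⱼ zⱼ ⊗ a wⱼ for all a ∈ H. -/

import Mathlib

/-!
Slicing a separability element `e = Σ zⱼ ⊗ wⱼ` with the counit gives a left integral
`Λ = Σ zⱼ ε(wⱼ)` with `ε(Λ) = 1`, and `e' = Σ S(Λ₁) ⊗ Λ₂` is the required element.
Since `S` is an antihomomorphism, `u ▷ (x ⊗ y) = Σ S(u₁) x ⊗ y u₂` is a right action of `H ⊗ H`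
on itself, and the two sides of Kanzaki's condition are `ΔΛ ▷ (a ⊗ 1)` and `ΔΛ ▷ (1 ⊗ a)`.
As `Δ(bΛ) = ε(b) ΔΛ`,
`ΔΛ ▷ (a ⊗ 1) = Σ Δ(a₂Λ) ▷ (a₁ ⊗ 1) = ΔΛ ▷ (Σ S(a₂) a₁ ⊗ a₃)`,
and `Σ S(a₂) a₁ = ε(a)` is where `S² = id` enters.
-/

open TensorProduct LinearMap Coalgebra HopfAlgebra

section Integral

variable {k H : Type*} [CommSemiring k] [Semiring H] [Bialgebra k H]

theorem exists_leftIntegral_counit_eq_one {e : H ⊗[k] H} (he_mul : mul' k H e = 1)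
    (he : ∀ a : H, rTensor H (mulLeft k a) e = lTensor H (mulRight k a) e) :
    ∃ Λ : H, (∀ a : H, a * Λ = counit (R := k) a • Λ) ∧ counit (R := k) Λ = 1 := by
  let slice : H ⊗[k] H →ₗ[k] H := (TensorProduct.rid k H).toLinearMap ∘ₗ lTensor H counit
  have slice_rTensor (a : H) : slice ∘ₗ rTensor H (mulLeft k a) = mulLeft k a ∘ₗ slice := by
    ext x y; simp [slice]
  have slice_lTensor (a : H) : slice ∘ₗ lTensor H (mulRight k a) = counit (R := k) a • slice := by
    ext x y; simp [slice, smul_smul, mul_comm]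
  have counit_slice : counit ∘ₗ slice = counit ∘ₗ mul' k H := by
    ext x y; simp [slice, mul_comm]
  refine ⟨slice e, fun a => ?_, ?_⟩
  · calc a * slice e = slice (rTensor H (mulLeft k a) e) := congr($(slice_rTensor a) e).symm
      _ = slice (lTensor H (mulRight k a) e) := by rw [he]
      _ = counit (R := k) a • slice e := congr($(slice_lTensor a) e)
  · simpa [he_mul] using congr($counit_slice e)

end Integral

namespace HopfAlgebra

variable (k H : Type*) [CommSemiring k] [Semiring H] [HopfAlgebra k H]

noncomputable def antipodeSandwich : H ⊗[k] H →ₗ[k] H ⊗[k] H →ₗ[k] H ⊗[k] H :=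
  map₂ (LinearMap.mul k H ∘ₗ antipode k) (LinearMap.mul k H).flip

variable {k H}

@[simp]
theorem antipodeSandwich_tmul (p q x y : H) :
    antipodeSandwich k H (p ⊗ₜ q) (x ⊗ₜ y) = (antipode k p * x) ⊗ₜ (y * q) := by
  simp [antipodeSandwich]

theorem antipodeSandwich_mul (u v y : H ⊗[k] H) :
    antipodeSandwich k H (u * v) y = antipodeSandwich k H v (antipodeSandwich k H u y) := by
  induction u using TensorProduct.induction_on with
  | zero => simp
  | add u₁ u₂ h₁ h₂ => simp [add_mul, h₁, h₂]
  | tmul p q =>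
    induction v using TensorProduct.induction_on with
    | zero => simp
    | add v₁ v₂ h₁ h₂ => simp [mul_add, h₁, h₂]
    | tmul r s =>
      induction y using TensorProduct.induction_on with
      | zero => simp
      | add y₁ y₂ h₁ h₂ => simp only [map_add, h₁, h₂]
      | tmul x z => simp [antipode_mul_antidistrib, mul_assoc]

theorem rTensor_mulRight_rTensor_antipode (u : H ⊗[k] H) (x : H) :
    rTensor H (mulRight k x) (rTensor H (antipode k) u) = antipodeSandwich k H u (x ⊗ₜ 1) := by
  induction u using TensorProduct.induction_on with
  | zero => simp
  | add u₁ u₂ h₁ h₂ => simp [h₁, h₂]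
  | tmul p q => simp

theorem lTensor_mulLeft_rTensor_antipode (u : H ⊗[k] H) (y : H) :
    lTensor H (mulLeft k y) (rTensor H (antipode k) u) = antipodeSandwich k H u (1 ⊗ₜ y) := by
  induction u using TensorProduct.induction_on with
  | zero => simp
  | add u₁ u₂ h₁ h₂ => simp [h₁, h₂]
  | tmul p q => simp

theorem mul'_comm_lTensor_antipode_comul_apply (hinv : ∀ x : H, antipode k (antipode k x) = x)
    (a : H) :
    mul' k H (TensorProduct.comm k H H ((antipode k).lTensor H (comul a))) =
      algebraMap k H (counit a) := by
  have h := congr(antipode k $(mul_antipode_rTensor_comul_apply (R := k) a))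
  have hS : (antipode k ∘ₗ antipode k : H →ₗ[k] H) = .id := LinearMap.ext hinv
  have := congr($(antipode_comp_mul_comp_comm (R := k) (A := H))
    (TensorProduct.comm k H H ((antipode k).rTensor H (comul a))))
  simp only [LinearMap.comp_apply, LinearEquiv.coe_coe, comm_comm] at this
  rw [this, map_comm, map_rTensor, hS, Algebra.algebraMap_eq_smul_one, map_smul, antipode_one,
    ← Algebra.algebraMap_eq_smul_one] at h
  exact h

variable (k H) in
noncomputable def antipodeSandwichLeft : H ⊗[k] (H ⊗[k] H) →ₗ[k] H ⊗[k] H :=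
  lift ((antipodeSandwich k H).flip ∘ₗ (TensorProduct.mk k H H).flip 1)

@[simp]
theorem antipodeSandwichLeft_tmul (x : H) (u : H ⊗[k] H) :
    antipodeSandwichLeft k H (x ⊗ₜ u) = antipodeSandwich k H u (x ⊗ₜ 1) := by
  simp [antipodeSandwichLeft]

theorem antipodeSandwichLeft_lTensor_comul_comul (hinv : ∀ x : H, antipode k (antipode k x) = x)
    (a : H) : antipodeSandwichLeft k H (lTensor H comul (comul a)) = 1 ⊗ₜ a := by
  have hassoc : antipodeSandwichLeft k H ∘ₗ (TensorProduct.assoc k H H H).toLinearMap =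
      rTensor H (mul' k H ∘ₗ (TensorProduct.comm k H H).toLinearMap ∘ₗ (antipode k).lTensor H) := by
    ext x p q; simp
  have hskew : mul' k H ∘ₗ (TensorProduct.comm k H H).toLinearMap ∘ₗ (antipode k).lTensor H ∘ₗ
      comul = Algebra.linearMap k H ∘ₗ counit :=
    LinearMap.ext (mul'_comm_lTensor_antipode_comul_apply hinv)
  rw [← coassoc_apply, ← LinearEquiv.coe_coe, ← LinearMap.comp_apply, hassoc,
    ← rTensor_comp_apply]
  simp only [comp_assoc, hskew, rTensor_comp_apply, rTensor_counit_comul]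
  simp

theorem antipodeSandwich_comul_leftIntegral (hinv : ∀ x : H, antipode k (antipode k x) = x)
    {Λ : H} (hΛ : ∀ b : H, b * Λ = counit (R := k) b • Λ) (a : H) :
    antipodeSandwich k H (comul Λ) (a ⊗ₜ 1) = antipodeSandwich k H (comul Λ) (1 ⊗ₜ a) := by
  let Ψ := antipodeSandwichLeft k H ∘ₗ lTensor H (comul ∘ₗ mulRight k Λ)
  have hmul :
      Ψ = antipodeSandwich k H (comul Λ) ∘ₗ antipodeSandwichLeft k H ∘ₗ lTensor H comul := by
    ext x b; simp [Ψ, Bialgebra.comul_mul, antipodeSandwich_mul]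
  have hint : Ψ = antipodeSandwich k H (comul Λ) ∘ₗ (TensorProduct.mk k H H).flip 1 ∘ₗ
      (TensorProduct.rid k H).toLinearMap ∘ₗ lTensor H counit := by
    ext x b; simp [Ψ, hΛ]
  calc antipodeSandwich k H (comul Λ) (a ⊗ₜ 1) = Ψ (comul a) := by simp [hint]
    _ = antipodeSandwich k H (comul Λ) (1 ⊗ₜ a) := by
      rw [hmul]; simp [antipodeSandwichLeft_lTensor_comul_comul hinv]

end HopfAlgebra

theorem separable_involutive_strongly_separable (k H : Type*) [CommRing k] [Ring H]
    [HopfAlgebra k H]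
    (hsep : ∃ e : H ⊗[k] H, LinearMap.mul' k H e = 1 ∧
      ∀ a : H, (LinearMap.rTensor H (LinearMap.mulLeft k a)) e
        = (LinearMap.lTensor H (LinearMap.mulRight k a)) e)
    (hinv : ∀ x : H, HopfAlgebra.antipode (R := k) (HopfAlgebra.antipode (R := k) x) = x) :
    ∃ e : H ⊗[k] H, LinearMap.mul' k H e = 1 ∧
      ∀ a : H, (LinearMap.rTensor H (LinearMap.mulRight k a)) e
        = (LinearMap.lTensor H (LinearMap.mulLeft k a)) e := by
  obtain ⟨e, he_mul, he⟩ := hsep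
  obtain ⟨Λ, hΛ, hεΛ⟩ := exists_leftIntegral_counit_eq_one he_mul he
  refine ⟨rTensor H (antipode k) (comul Λ), by simp [hεΛ], fun a => ?_⟩
  rw [rTensor_mulRight_rTensor_antipode, lTensor_mulLeft_rTensor_antipode]
  exact antipodeSandwich_comul_leftIntegral hinv hΛ a
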